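/- arXiv:1101.1380 — 2 statements merged into one kernel-verified Lean document; each statement's English description precedes it below -/
import Mathlib

section
/- On the torus T² = ℂ/ℤ² with real structure c([z]) = [z̄] (which has two real components), there is no homotopically non-trivial simple closed curve a with c(a) = a on which c acts as a fixed-point-free (antipodal) involution. -/
/-!
STATEMENT 8: on T² = ℂ/ℤ² with the conjugation real structure c (two real
components), there is no homotopically non-trivial simple closed curve a with
c(a) = a on which c acts as a fixed-point-free (antipodal) involution.

A simple closed curve is formalized as an injective continuous map from the circle.
-/

noncomputable section
noncomputable section

/-- The Gaussian lattice ℤ + ℤi in ℂ. -/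
def GaussianLattice : AddSubgroup ℂ := AddSubgroup.closure {1, Complex.I}

/-- The torus ℂ/(ℤ + ℤi). -/
abbrev Torus : Type := ℂ ⧸ GaussianLattice

/-- Complex conjugation as an additive homomorphism. -/
def conjHom : ℂ →+ ℂ :=
  AddMonoidHom.mk' (fun z => (starRingEnd ℂ) z) (fun a b => by simp)

lemma conj_maps_lattice : GaussianLattice ≤ GaussianLattice.comap conjHom := by
  rw [GaussianLattice, AddSubgroup.closure_le]
  rintro z hz
  simp only [Set.mem_insert_iff, Set.mem_singleton_iff] at hz
  rcases hz with rfl | rfl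
  · refine AddSubgroup.mem_comap.mpr ?_
    have h : conjHom (1 : ℂ) = 1 := by simp [conjHom]
    rw [h]
    exact AddSubgroup.subset_closure (k := ({1, Complex.I} : Set ℂ)) (by simp)
  · refine AddSubgroup.mem_comap.mpr ?_
    have h : conjHom Complex.I = -Complex.I := by simp [conjHom]
    rw [h]
    exact neg_mem (AddSubgroup.subset_closure (k := ({1, Complex.I} : Set ℂ)) (by simp))

/-- The real structure on the torus induced by complex conjugation `z ↦ z̄`. -/
def torusConj : Torus → Torus :=
  QuotientAddGroup.map GaussianLattice GaussianLattice conjHom conj_maps_lattice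

/-!
The imaginary part `Im z mod 1` is a circle-valued coordinate on the torus that `c` reverses.
Composing it with `θ ↦ sin (2πθ)` gives a continuous real function `h` with `h ∘ c = -h`, whose
zeros (`Im z ∈ ½ℤ`) are exactly fixed points of `c`. On a connected `c`-invariant set, `h` takes
both values `h p` and `-h p`, so by the intermediate value theorem it vanishes somewhere: such a
set, and in particular an invariant curve, always meets the real locus of `c`.
-/

theorem IsPreconnected.exists_eq_zero_of_comp_eq_neg {X : Type*} [TopologicalSpace X]
    {σ : X → X} {f : X → ℝ} (hf : Continuous f) (hodd : ∀ x, f (σ x) = -f x)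
    {S : Set X} (hS : IsPreconnected S) (hσS : Set.MapsTo σ S S) (hne : S.Nonempty) :
    ∃ x ∈ S, f x = 0 := by
  obtain ⟨x, hx⟩ := hne
  have hIVT := hS.intermediate_value hx (hσS hx) hf.continuousOn
  have hIVT' := hS.intermediate_value (hσS hx) hx hf.continuousOn
  rw [hodd] at hIVT hIVT'
  rcases le_total (f x) 0 with hle | hle
  · exact hIVT ⟨hle, by linarith⟩
  · exact hIVT' ⟨by linarith, hle⟩

namespace AddCircle

variable {T : ℝ}

theorem im_toCircle_neg (x : AddCircle T) :
    (toCircle (-x) : ℂ).im = -(toCircle x : ℂ).im := by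
  rw [toCircle_neg, Circle.coe_inv_eq_conj, Complex.conj_im]

theorem neg_eq_self_of_im_toCircle_eq_zero (hT : T ≠ 0) {x : AddCircle T}
    (h : (toCircle x : ℂ).im = 0) : -x = x := by
  refine injective_toCircle hT (Circle.ext ?_)
  rw [toCircle_neg, Circle.coe_inv_eq_conj, Complex.conj_eq_iff_im.mpr h]

end AddCircle

lemma gaussianLattice_le_comap_im :
    GaussianLattice ≤ (AddSubgroup.zmultiples (1 : ℝ)).comap Complex.imAddGroupHom := by
  rw [GaussianLattice, AddSubgroup.closure_le]
  rintro z (rfl | rfl)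
  · simp
  · simp

def torusIm : Torus →+ AddCircle (1 : ℝ) :=
  QuotientAddGroup.map _ _ Complex.imAddGroupHom gaussianLattice_le_comap_im

@[simp]
lemma torusIm_mk (z : ℂ) : torusIm (z : Torus) = (z.im : AddCircle (1 : ℝ)) := rfl

@[simp]
lemma torusConj_mk (z : ℂ) : torusConj (z : Torus) = ((starRingEnd ℂ z : ℂ) : Torus) := rfl

lemma continuous_torusIm : Continuous torusIm :=
  (QuotientAddGroup.isQuotientMap_mk GaussianLattice).continuous_iff.mpr <|
    continuous_quot_mk.comp Complex.continuous_im

lemma torusIm_torusConj (p : Torus) : torusIm (torusConj p) = -torusIm p := by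
  induction p using QuotientAddGroup.induction_on with
  | H z => simp only [torusConj_mk, torusIm_mk, Complex.conj_im, AddCircle.coe_neg]

lemma intCast_mul_I_mem_gaussianLattice (n : ℤ) : (n : ℂ) * Complex.I ∈ GaussianLattice := by
  have hI : Complex.I ∈ GaussianLattice := AddSubgroup.subset_closure (by simp)
  simpa [zsmul_eq_mul] using AddSubgroup.zsmul_mem GaussianLattice hI n

lemma torusConj_eq_self_of_neg_torusIm_eq {p : Torus} (h : -torusIm p = torusIm p) :
    torusConj p = p := by
  induction p using QuotientAddGroup.induction_on with
  | H z =>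
    rw [torusIm_mk, ← AddCircle.coe_neg, QuotientAddGroup.eq] at h
    obtain ⟨n, hn⟩ := AddSubgroup.mem_zmultiples_iff.mp h
    rw [torusConj_mk, QuotientAddGroup.eq]
    -- `z - z̄ = 2 i Im z`, and `2 Im z = n ∈ ℤ`
    have hz : -(starRingEnd ℂ) z + z = (n : ℂ) * Complex.I := by
      simp only [zsmul_eq_mul, mul_one] at hn
      apply Complex.ext <;> simp [hn]
    rw [hz]
    exact intCast_mul_I_mem_gaussianLattice n

theorem exists_torusConj_eq_self_of_isPreconnected {S : Set Torus} (hS : IsPreconnected S)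
    (hconjS : Set.MapsTo torusConj S S) (hne : S.Nonempty) : ∃ p ∈ S, torusConj p = p := by
  let h : Torus → ℝ := fun p ↦ (AddCircle.toCircle (torusIm p) : ℂ).im
  have hh : Continuous h := Complex.continuous_im.comp <|
    continuous_subtype_val.comp <| AddCircle.continuous_toCircle.comp continuous_torusIm
  have hodd : ∀ p, h (torusConj p) = -h p := fun p ↦ by
    simp only [h, torusIm_torusConj, AddCircle.im_toCircle_neg]
  obtain ⟨p, hpS, hp⟩ := hS.exists_eq_zero_of_comp_eq_neg hh hodd hconjS hne
  exact ⟨p, hpS, torusConj_eq_self_of_neg_torusIm_eq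
    (AddCircle.neg_eq_self_of_im_toCircle_eq_zero one_ne_zero hp)⟩

theorem no_antipodal_invariant_curve :
    ¬ ∃ γ : C(AddCircle (1 : ℝ), Torus),
        Function.Injective γ ∧
        ¬ γ.Nullhomotopic ∧
        torusConj '' Set.range γ = Set.range γ ∧
        ∀ x ∈ Set.range γ, torusConj x ≠ x := by
  rintro ⟨γ, -, -, hinv, hfree⟩
  obtain ⟨p, hp, hfix⟩ := exists_torusConj_eq_self_of_isPreconnected
    (isPreconnected_range γ.continuous) (Set.mapsTo_iff_image_subset.mpr hinv.subset)
    (Set.range_nonempty γ)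
  exact hfree p hp hfix

end
end
end

section
/- Let Λ = ℤv₁ + ℤv₂ with v₁ = (1/√2)(1+i), v₂ = (1/√2)(1−i), and c the conjugation-induced real structure on ℂ/Λ (one real component). Then the quotient (ℂ/Λ)/c is homeomorphic to a Möbius band. -/
/-!
STATEMENT 12: let Λ = ℤv₁ + ℤv₂ with v₁ = (1+i)/√2, v₂ = (1−i)/√2, and let c be the
conjugation-induced real structure on ℂ/Λ (one real component).  Then the quotient
(ℂ/Λ)/c is homeomorphic to a Möbius band.
-/

noncomputable section
noncomputable section

/-- v₁ = (1 + i)/√2. -/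
def v₁ : ℂ := (1 + Complex.I) / (Real.sqrt 2 : ℂ)

/-- v₂ = (1 − i)/√2. -/
def v₂ : ℂ := (1 - Complex.I) / (Real.sqrt 2 : ℂ)

/-- The lattice Λ = ℤv₁ + ℤv₂. -/
def Lambda : AddSubgroup ℂ := AddSubgroup.closure {v₁, v₂}

/-- The torus ℂ/Λ. -/
abbrev TorusL : Type := ℂ ⧸ Lambda

lemma conj_v₁ : conjHom v₁ = v₂ := by
  simp only [conjHom, AddMonoidHom.mk'_apply, v₁, v₂, map_div₀, map_add, map_one,
    Complex.conj_I, Complex.conj_ofReal]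
  ring

lemma conj_v₂ : conjHom v₂ = v₁ := by
  simp only [conjHom, AddMonoidHom.mk'_apply, v₁, v₂, map_div₀, map_sub, map_one,
    Complex.conj_I, Complex.conj_ofReal]
  ring

lemma conj_maps_Lambda : Lambda ≤ Lambda.comap conjHom := by
  rw [Lambda, AddSubgroup.closure_le]
  rintro z hz
  simp only [Set.mem_insert_iff, Set.mem_singleton_iff] at hz
  rcases hz with rfl | rfl
  · refine AddSubgroup.mem_comap.mpr ?_
    rw [conj_v₁]
    exact AddSubgroup.subset_closure (k := ({v₁, v₂} : Set ℂ)) (by simp)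
  · refine AddSubgroup.mem_comap.mpr ?_
    rw [conj_v₂]
    exact AddSubgroup.subset_closure (k := ({v₁, v₂} : Set ℂ)) (by simp)

/-- The real structure on ℂ/Λ induced by complex conjugation. -/
def torusLConj : TorusL → TorusL :=
  QuotientAddGroup.map Lambda Lambda conjHom conj_maps_Lambda

/-- The Möbius band: `(ℝ × [-1,1]) / ((x,y) ~ (x+1,-y))`. -/
abbrev MobiusBand : Type :=
  Quot (fun p q : ℝ × (Set.Icc (-1 : ℝ) 1) => q.1 = p.1 + 1 ∧ (q.2 : ℝ) = -(p.2 : ℝ))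

/-! In the coordinates `√2 z` the lattice is spanned by `1 ± i`, so the map
`z ↦ (√2 Re z, cos (π √2 Im z))` to the strip `ℝ × [-1, 1]` is invariant under `Λ` and under
conjugation, and translation by `v₁` acts on the strip as `(x, y) ↦ (x + 1, -y)`. Conversely
the strip relation is conjugation followed by translation by `v₁`, so
`(x, y) ↦ (x + i arccos y / π) / √2` descends to the quotients. Since `arccos ∘ cos` is the
distance to `2πℤ`, the round trip from `ℂ` moves a point by a lattice vector and possibly a
conjugation. -/

open Real Function Set ComplexConjugate

theorem Real.exists_arccos_cos_eq_abs_sub (θ : ℝ) :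
    ∃ k : ℤ, arccos (cos θ) = |θ - k * (2 * π)| := by
  obtain ⟨hlo, hhi⟩ := toIcoMod_mem_Ico two_pi_pos (-π) θ
  refine ⟨toIcoDiv two_pi_pos (-π) θ, ?_⟩
  rw [← zsmul_eq_mul, self_sub_toIcoDiv_zsmul]
  have hcos : cos θ = cos |toIcoMod two_pi_pos (-π) θ| := by
    rw [cos_abs, ← self_sub_toIcoDiv_zsmul, zsmul_eq_mul, cos_sub_int_mul_two_pi]
  rw [hcos, arccos_cos (abs_nonneg _) (abs_le.2 ⟨hlo, by linarith⟩)]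

lemma ofReal_sqrt_two_mul_self : (√2 : ℂ) * √2 = 2 := by
  rw [← Complex.ofReal_mul, mul_self_sqrt zero_le_two, Complex.ofReal_ofNat]

lemma v₁_mem_Lambda : v₁ ∈ Lambda := AddSubgroup.subset_closure (by simp)

lemma v₂_mem_Lambda : v₂ ∈ Lambda := AddSubgroup.subset_closure (by simp)

lemma sqrt_two_mul_I_mem_Lambda : (√2 * Complex.I : ℂ) ∈ Lambda := by
  have h : v₁ - v₂ = √2 * Complex.I := by
    rw [v₁, v₂, div_sub_div_same, div_eq_iff (by simp), mul_assoc, mul_comm Complex.I,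
      ← mul_assoc, ofReal_sqrt_two_mul_self]
    ring
  exact h ▸ sub_mem v₁_mem_Lambda v₂_mem_Lambda

lemma Function.Periodic.of_mem_Lambda {α : Type*} {f : ℂ → α} (h₁ : Periodic f v₁)
    (h₂ : Periodic f v₂) {l : ℂ} (hl : l ∈ Lambda) : Periodic f l := by
  induction hl using AddSubgroup.closure_induction with
  | mem x hx =>
    rcases hx with rfl | rfl
    exacts [h₁, h₂]
  | zero => exact fun z => by rw [add_zero]
  | add x y _ _ hx hy => exact hx.add_period hy
  | neg x _ hx => exact hx.neg

abbrev TorusLQuot : Type := Quot (fun p q : TorusL => q = torusLConj p)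

def toTorusLQuot (z : ℂ) : TorusLQuot := Quot.mk _ (z : TorusL)

lemma toTorusLQuot_surjective : Surjective toTorusLQuot :=
  Quot.mk_surjective.comp QuotientAddGroup.mk_surjective

lemma continuous_toTorusLQuot : Continuous toTorusLQuot :=
  continuous_quot_mk.comp QuotientAddGroup.continuous_mk

lemma toTorusLQuot_add_of_mem {l : ℂ} (hl : l ∈ Lambda) (z : ℂ) :
    toTorusLQuot (z + l) = toTorusLQuot z :=
  congrArg (Quot.mk _) (QuotientAddGroup.mk_add_of_mem z hl)

lemma toTorusLQuot_conj (z : ℂ) : toTorusLQuot (conj z) = toTorusLQuot z := by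
  symm
  apply Quot.sound
  exact (QuotientAddGroup.map_mk Lambda Lambda conjHom conj_maps_Lambda z).symm

lemma toTorusLQuot_re_add_abs_im (z : ℂ) :
    toTorusLQuot (z.re + |z.im| * Complex.I) = toTorusLQuot z := by
  rcases abs_choice z.im with h | h
  · rw [h, Complex.re_add_im]
  · rw [h, ← toTorusLQuot_conj z]
    congr 1
    apply Complex.ext <;> simp

def mobiusCoords (z : ℂ) : ℝ × Icc (-1 : ℝ) 1 :=
  (√2 * z.re, ⟨cos (π * (√2 * z.im)), neg_one_le_cos _, cos_le_one _⟩)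

def ofMobiusCoords (p : ℝ × Icc (-1 : ℝ) 1) : ℂ :=
  (p.1 + (arccos p.2 / π : ℝ) * Complex.I) / √2

lemma continuous_mobiusCoords : Continuous mobiusCoords := by
  unfold mobiusCoords
  fun_prop

lemma continuous_ofMobiusCoords : Continuous ofMobiusCoords := by
  unfold ofMobiusCoords
  fun_prop

lemma mobiusCoords_ofMobiusCoords (p : ℝ × Icc (-1 : ℝ) 1) :
    mobiusCoords (ofMobiusCoords p) = p := by
  obtain ⟨x, y, hy⟩ := p
  have hre : (ofMobiusCoords (x, ⟨y, hy⟩)).re = x / √2 := by simp [ofMobiusCoords]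
  have him : (ofMobiusCoords (x, ⟨y, hy⟩)).im = arccos y / π / √2 := by simp [ofMobiusCoords]
  refine Prod.ext ?_ (Subtype.ext ?_)
  · simp only [mobiusCoords, hre]
    field_simp
  · simp only [mobiusCoords, him]
    field_simp
    exact cos_arccos hy.1 hy.2

def toMobius (z : ℂ) : MobiusBand := Quot.mk _ (mobiusCoords z)

lemma continuous_toMobius : Continuous toMobius :=
  continuous_quot_mk.comp continuous_mobiusCoords

lemma toMobius_periodic_of_sqrt_two_mul {v : ℂ} (hre : √2 * v.re = 1)
    (him : √2 * v.im = 1 ∨ √2 * v.im = -1) : Periodic toMobius v := by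
  intro z
  refine (Quot.sound ⟨?_, ?_⟩).symm
  · simp only [mobiusCoords, Complex.add_re, mul_add, hre]
  · simp only [mobiusCoords, Complex.add_im, mul_add]
    rcases him with him | him
    · rw [him, mul_one, cos_add_pi]
    · rw [him, mul_neg_one, ← sub_eq_add_neg, cos_sub_pi]

lemma toMobius_periodic_of_mem_Lambda {l : ℂ} (hl : l ∈ Lambda) : Periodic toMobius l := by
  refine Periodic.of_mem_Lambda ?_ ?_ hl <;>
    refine toMobius_periodic_of_sqrt_two_mul ?_ ?_ <;> simp [v₁, v₂, neg_div]

lemma toMobius_conj (z : ℂ) : toMobius (conj z) = toMobius z := by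
  simp only [toMobius, mobiusCoords, Complex.conj_re, Complex.conj_im, mul_neg, cos_neg]

lemma ofMobiusCoords_eq_conj_add_v₁ {p q : ℝ × Icc (-1 : ℝ) 1} (h₁ : q.1 = p.1 + 1)
    (h₂ : (q.2 : ℝ) = -p.2) : ofMobiusCoords q = conj (ofMobiusCoords p) + v₁ := by
  have harccos : arccos q.2 / π = 1 - arccos p.2 / π := by
    rw [h₂, arccos_neg]
    field_simp
  rw [ofMobiusCoords, ofMobiusCoords, h₁, harccos, v₁]
  simp only [map_div₀, map_add, map_mul, Complex.conj_ofReal, Complex.conj_I]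
  push_cast
  field_simp
  ring

lemma exists_mem_Lambda_ofMobiusCoords_mobiusCoords (z : ℂ) :
    ∃ l ∈ Lambda, ofMobiusCoords (mobiusCoords z) = (z + l).re + |(z + l).im| * Complex.I := by
  obtain ⟨k, hk⟩ := exists_arccos_cos_eq_abs_sub (π * (√2 * z.im))
  have habs : arccos (cos (π * (√2 * z.im))) / π = √2 * |z.im - k * √2| := by
    have h2 : π * (√2 * z.im) - k * (2 * π) = π * (√2 * (z.im - k * √2)) := by
      linear_combination (π * k) * mul_self_sqrt (zero_le_two : (0 : ℝ) ≤ 2)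
    rw [hk, h2, abs_mul, abs_mul, abs_of_pos pi_pos, abs_of_pos (by positivity)]
    field_simp
  refine ⟨(-k) • (√2 * Complex.I), zsmul_mem sqrt_two_mul_I_mem_Lambda _, ?_⟩
  apply Complex.ext
  · simp [ofMobiusCoords, mobiusCoords]
  · simp [ofMobiusCoords, mobiusCoords, habs, ← sub_eq_add_neg]

def torusLQuotToMobius : TorusLQuot → MobiusBand :=
  Quot.lift
    (Quotient.lift toMobius fun a b h => by
      simpa using (toMobius_periodic_of_mem_Lambda (QuotientAddGroup.leftRel_apply.1 h) a).symm)
    (by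
      rintro p _ rfl
      induction p using QuotientAddGroup.induction_on
      exact (toMobius_conj _).symm)

def mobiusToTorusLQuot : MobiusBand → TorusLQuot :=
  Quot.lift (toTorusLQuot ∘ ofMobiusCoords) fun p q ⟨h₁, h₂⟩ => by
    rw [comp_apply, comp_apply, ofMobiusCoords_eq_conj_add_v₁ h₁ h₂,
      toTorusLQuot_add_of_mem v₁_mem_Lambda, toTorusLQuot_conj]

lemma mobiusToTorusLQuot_torusLQuotToMobius (q : TorusLQuot) :
    mobiusToTorusLQuot (torusLQuotToMobius q) = q := by
  obtain ⟨z, rfl⟩ := toTorusLQuot_surjective q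
  obtain ⟨l, hl, hz⟩ := exists_mem_Lambda_ofMobiusCoords_mobiusCoords z
  change toTorusLQuot (ofMobiusCoords (mobiusCoords z)) = _
  rw [hz, toTorusLQuot_re_add_abs_im, toTorusLQuot_add_of_mem hl]

lemma torusLQuotToMobius_mobiusToTorusLQuot (m : MobiusBand) :
    torusLQuotToMobius (mobiusToTorusLQuot m) = m := by
  induction m using Quot.ind with
  | mk p => exact congrArg (Quot.mk _) (mobiusCoords_ofMobiusCoords p)

lemma continuous_torusLQuotToMobius : Continuous torusLQuotToMobius :=
  continuous_quot_lift _ (continuous_toMobius.quotient_lift _)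

lemma continuous_mobiusToTorusLQuot : Continuous mobiusToTorusLQuot :=
  continuous_quot_lift _ (continuous_toTorusLQuot.comp continuous_ofMobiusCoords)

theorem quotient_is_mobius_band :
    Nonempty (Quot (fun p q : TorusL => q = torusLConj p) ≃ₜ MobiusBand) :=
  ⟨{ toFun := torusLQuotToMobius
     invFun := mobiusToTorusLQuot
     left_inv := mobiusToTorusLQuot_torusLQuotToMobius
     right_inv := torusLQuotToMobius_mobiusToTorusLQuot
     continuous_toFun := continuous_torusLQuotToMobius
     continuous_invFun := continuous_mobiusToTorusLQuot }⟩

end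
end
end
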